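/- arXiv:1307.6127 — 2 statements merged into one kernel-verified Lean document; each statement's English description precedes it below -/
import Mathlib

section
/- Let ℓ¹,…,ℓᴺ be strictly positive numbers, not all equal, and for φ > 0 define normalized weights Wʲ(φ) = (ℓʲ)^φ / ∑_{s=1}^N (ℓˢ)^φ and ESS(φ) = (∑_j Wʲ(φ)²)^{-1}. Then ESS(φ) is strictly decreasing in φ on (0,∞), with lim_{φ→0⁺} ESS(φ) = N. -/
/-!
With `S φ = ∑ⱼ (ℓʲ)^φ` we have `ESS φ = S φ ^ 2 / S (2φ)`, so `log ESS φ = 2 g φ - g (2φ)` for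
the log-sum-exp function `g = log ∘ S`. The second derivative of `g` is the variance of `log ℓ`
under the tempered weights, which is positive because the `ℓʲ` are not all equal; hence `g` is
strictly convex, and comparing its secant slopes on `[φ, ψ]` and `[2φ, 2ψ]` shows that
`2 g φ - g (2φ)` is strictly decreasing. At `φ = 0` all weights are `1/N`, and `ESS` is continuous.
-/

open Real Finset Set Filter Topology

variable {ι : Type*} [Fintype ι]

theorem sum_mul_sq_mul_sum_sub_sq_sum_mul (w c : ι → ℝ) :
    (∑ i, w i * c i ^ 2) * (∑ i, w i) - (∑ i, w i * c i) ^ 2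
      = (∑ i, ∑ j, w i * w j * (c i - c j) ^ 2) / 2 := by
  have expand : ∀ i j, w i * w j * (c i - c j) ^ 2
      = w i * c i ^ 2 * w j + w j * c j ^ 2 * w i - w i * c i * (w j * c j)
        - w i * c i * (w j * c j) := by
    intro i j; ring
  have hsymm : ∑ i, ∑ j, w j * c j ^ 2 * w i = ∑ i, ∑ j, w i * c i ^ 2 * w j := sum_comm
  simp_rw [expand, sum_sub_distrib, sum_add_distrib, hsymm]
  rw [sum_mul_sum, sq, sum_mul_sum]
  ring

theorem sq_sum_mul_lt_sum_mul_sq_mul_sum {w c : ι → ℝ} (hw : ∀ i, 0 < w i) {i₀ j₀ : ι}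
    (hc : c i₀ ≠ c j₀) :
    (∑ i, w i * c i) ^ 2 < (∑ i, w i * c i ^ 2) * (∑ i, w i) := by
  have hnn : ∀ i j, 0 ≤ w i * w j * (c i - c j) ^ 2 := fun i j => by
    have := hw i; have := hw j; positivity
  have hij : 0 < w i₀ * w j₀ * (c i₀ - c j₀) ^ 2 := by
    have := sub_ne_zero.mpr hc; have := hw i₀; have := hw j₀; positivity
  have hsum : 0 < ∑ i, ∑ j, w i * w j * (c i - c j) ^ 2 :=
    sum_pos' (fun i _ => sum_nonneg fun j _ => hnn i j)
      ⟨i₀, mem_univ _, sum_pos' (fun j _ => hnn i₀ j) ⟨j₀, mem_univ _, hij⟩⟩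
  linarith [sum_mul_sq_mul_sum_sub_sq_sum_mul w c]

theorem StrictConvexOn.strictAntiOn_two_mul_sub_comp_two_mul {g : ℝ → ℝ}
    (hg : StrictConvexOn ℝ (Ioi 0) g) : StrictAntiOn (fun t => 2 * g t - g (2 * t)) (Ioi 0) := by
  intro a (ha : 0 < a) b (hb : 0 < b) hab
  have hslope : (g b - g a) / (b - a) < (g (2 * b) - g (2 * a)) / (2 * b - 2 * a) :=
    (hg.secant_strict_mono_aux2 ha (mem_Ioi.2 (by positivity)) hab (by linarith)).trans
      (hg.secant_strict_mono_aux3 ha (mem_Ioi.2 (by positivity)) (by linarith) (by linarith))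
  rw [div_lt_div_iff₀ (by linarith) (by linarith)] at hslope
  dsimp only
  nlinarith

section LogSumExp

variable (c : ι → ℝ)

noncomputable def expMoment (n : ℕ) (t : ℝ) : ℝ := ∑ k, exp (c k * t) * c k ^ n

theorem hasDerivAt_expMoment (n : ℕ) (t : ℝ) :
    HasDerivAt (expMoment c n) (expMoment c (n + 1) t) t := by
  unfold expMoment
  refine HasDerivAt.fun_sum fun k _ => ?_
  exact (((hasDerivAt_id' t).const_mul (c k)).exp.mul_const (c k ^ n)).congr_deriv (by ring)

theorem expMoment_zero_pos [Nonempty ι] (t : ℝ) : 0 < expMoment c 0 t := by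
  simp only [expMoment, pow_zero, mul_one]
  positivity

theorem strictConvexOn_log_expMoment_zero {i j : ι} (hc : c i ≠ c j) :
    StrictConvexOn ℝ univ (fun t => log (expMoment c 0 t)) := by
  have : Nonempty ι := ⟨i⟩
  have hlog' : ∀ t, HasDerivAt (fun t => log (expMoment c 0 t))
      (expMoment c 1 t / expMoment c 0 t) t := fun t =>
    (hasDerivAt_expMoment c 0 t).log (expMoment_zero_pos c t).ne'
  have hlog'' : ∀ t, HasDerivAt (fun t => expMoment c 1 t / expMoment c 0 t)
      ((expMoment c 2 t * expMoment c 0 t - expMoment c 1 t * expMoment c 1 t)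
        / expMoment c 0 t ^ 2) t := fun t =>
    (hasDerivAt_expMoment c 1 t).div (hasDerivAt_expMoment c 0 t) (expMoment_zero_pos c t).ne'
  refine strictConvexOn_univ_of_deriv2_pos
    (continuous_iff_continuousAt.2 fun t => (hlog' t).continuousAt) fun t => ?_
  rw [Function.iterate_succ_apply, Function.iterate_one, funext fun t => (hlog' t).deriv,
    (hlog'' t).deriv]
  have hvar := sq_sum_mul_lt_sum_mul_sq_mul_sum (w := fun k => exp (c k * t))
    (fun k => exp_pos _) hc
  simp only [expMoment, pow_zero, pow_one, mul_one] at hvar ⊢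
  have := expMoment_zero_pos c t
  apply div_pos _ (by positivity)
  linarith

end LogSumExp

section ESS

noncomputable def ess (ℓ : ι → ℝ) (φ : ℝ) : ℝ := (∑ j, (ℓ j ^ φ / ∑ s, ℓ s ^ φ) ^ 2)⁻¹

variable {ℓ : ι → ℝ}

theorem ess_eq_sq_div (hℓ : ∀ k, 0 ≤ ℓ k) (φ : ℝ) :
    ess ℓ φ = (∑ k, ℓ k ^ φ) ^ 2 / ∑ k, ℓ k ^ (2 * φ) := by
  have hsq : ∀ k, (ℓ k ^ φ) ^ 2 = ℓ k ^ (2 * φ) := fun k => by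
    rw [mul_comm, rpow_mul (hℓ k), rpow_two]
  simp_rw [ess, div_pow, ← sum_div, hsq, inv_div]

theorem expMoment_log_zero (hℓ : ∀ k, 0 < ℓ k) (t : ℝ) :
    expMoment (fun k => log (ℓ k)) 0 t = ∑ k, ℓ k ^ t := by
  simp [expMoment, rpow_def_of_pos (hℓ _)]

theorem strictAntiOn_ess (hℓ : ∀ k, 0 < ℓ k) {i j : ι} (hij : ℓ i ≠ ℓ j) :
    StrictAntiOn (ess ℓ) (Ioi 0) := by
  have : Nonempty ι := ⟨i⟩
  have hg : StrictConvexOn ℝ univ fun t : ℝ => log (∑ k, ℓ k ^ t) := by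
    simpa only [expMoment_log_zero hℓ] using strictConvexOn_log_expMoment_zero
      (fun k => log (ℓ k)) fun h => hij (log_injOn_pos (hℓ i) (hℓ j) h)
  have hS : ∀ t : ℝ, 0 < ∑ k, ℓ k ^ t := fun t =>
    sum_pos (fun k _ => rpow_pos_of_pos (hℓ k) t) univ_nonempty
  have hess : ∀ t, ess ℓ t = exp (2 * log (∑ k, ℓ k ^ t) - log (∑ k, ℓ k ^ (2 * t))) := by
    intro t
    rw [ess_eq_sq_div (fun k => (hℓ k).le), exp_sub, two_mul (log _), exp_add,
      exp_log (hS _), exp_log (hS _), sq]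
  rw [funext hess]
  exact exp_strictMono.comp_strictAntiOn
    (hg.subset (subset_univ _) (convex_Ioi 0)).strictAntiOn_two_mul_sub_comp_two_mul

theorem tendsto_ess_nhdsGT_zero [Nonempty ι] (hℓ : ∀ k, 0 < ℓ k) :
    Tendsto (ess ℓ) (𝓝[>] 0) (𝓝 (Fintype.card ι)) := by
  have hS : Continuous fun t : ℝ => ∑ k, ℓ k ^ t :=
    continuous_finsetSum _ fun k _ => continuous_const_rpow (hℓ k).ne'
  have hcont : ContinuousAt (fun t : ℝ => (∑ k, ℓ k ^ t) ^ 2 / ∑ k, ℓ k ^ (2 * t)) 0 :=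
    (hS.pow 2).continuousAt.div (hS.comp (continuous_const_mul 2)).continuousAt
      (by simp [Fintype.card_ne_zero])
  have hval : (∑ k, ℓ k ^ (0 : ℝ)) ^ 2 / ∑ k, ℓ k ^ (2 * (0 : ℝ)) = Fintype.card ι := by
    simp [sq]
  rw [funext (ess_eq_sq_div fun k => (hℓ k).le), ← hval]
  exact hcont.tendsto.mono_left nhdsWithin_le_nhds

end ESS

/-- For strictly positive likelihood values `ℓ¹,…,ℓᴺ`, not all equal, the effective sample
size `ESS(φ) = (∑_j (ℓʲ)^φ/∑_s (ℓˢ)^φ)²)⁻¹` of the tempered weights is strictly decreasing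
in `φ` on `(0,∞)`, and `ESS(φ) → N` as `φ → 0⁺`. -/
theorem ess_strictAnti_and_limit (N : ℕ) (ℓ : Fin N → ℝ) (hpos : ∀ j, 0 < ℓ j)
    (hne : ∃ i j, ℓ i ≠ ℓ j) :
    StrictAntiOn
        (fun φ : ℝ => (∑ j, ((ℓ j) ^ φ / ∑ s, (ℓ s) ^ φ) ^ 2)⁻¹) (Set.Ioi (0:ℝ)) ∧
      Filter.Tendsto (fun φ : ℝ => (∑ j, ((ℓ j) ^ φ / ∑ s, (ℓ s) ^ φ) ^ 2)⁻¹)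
        (nhdsWithin 0 (Set.Ioi 0)) (nhds (N : ℝ)) := by
  obtain ⟨i, j, hij⟩ := hne
  have : Nonempty (Fin N) := ⟨i⟩
  refine ⟨strictAntiOn_ess hpos hij, ?_⟩
  have := tendsto_ess_nhdsGT_zero hpos
  rwa [Fintype.card_fin] at this
end

section
/- Let μ₀ = N(0,C) on ℝᵈ with C positive definite, and let μ be the measure with density dμ/dμ₀(u) ∝ l(u) for a positive bounded measurable function l. Then the Metropolis–Hastings kernel built from the pCN proposal ũ = ρu + √(1-ρ²)N(0,C) with acceptance probability min{1, l(ũ)/l(u)} is reversible with respect to μ, and in particular μ-invariant. -/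
/-!
Under the prior `N(0, C)`, a pCN step `u ↦ v` has joint density proportional to
`exp (-(|u|² - 2ρ⟨u, v⟩ + |v|²) / (2(1 - ρ²)))` in the `C⁻¹` inner product, which is symmetric in
`(u, v)`: the proposal is itself reversible for the prior. Weighting by the likelihood and the
acceptance probability multiplies this by `l u * min 1 (l v / l u) = min (l u) (l v)`, again
symmetric, so by Tonelli the accepted moves of the Metropolis–Hastings chain are in detailed
balance with the posterior. Rejected moves stay at `u` and contribute a diagonal, symmetric term.
Invariance is reversibility tested on `Set.univ`, as the kernel is Markov.
-/

open Real Matrix MeasureTheory ProbabilityTheory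
open scoped ENNReal

/-- Gaussian density on `ℝᵈ` with mean `m` and (positive definite) covariance `C`. -/
noncomputable def gaussPdf (d : ℕ) (C : Matrix (Fin d) (Fin d) ℝ) (m x : Fin d → ℝ) : ℝ :=
  Real.exp (-(1 / 2) * ((x - m) ⬝ᵥ (C⁻¹ *ᵥ (x - m)))) /
    Real.sqrt ((2 * Real.pi) ^ d * C.det)

open Function

namespace ProbabilityTheory.Kernel

variable {X : Type*} [MeasurableSpace X]

-- Detailed balance tested against all measurable `f, g ≥ 0`; Mathlib's `Kernel.IsReversible` is
-- the case of indicator functions.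
def IsLintegralReversible (K : Kernel X X) (μ : Measure X) : Prop :=
  ∀ f g : X → ℝ≥0∞, Measurable f → Measurable g →
    ∫⁻ u, f u * ∫⁻ v, g v ∂(K u) ∂μ = ∫⁻ u, g u * ∫⁻ v, f v ∂(K u) ∂μ

lemma IsLintegralReversible.isReversible {K : Kernel X X} {μ : Measure X}
    (h : K.IsLintegralReversible μ) : K.IsReversible μ := by
  intro A B hA hB
  have hAB := h (A.indicator 1) (B.indicator 1) (measurable_one.indicator hA)
    (measurable_one.indicator hB)
  have hset : ∀ {C : Set X}, MeasurableSet C → ∀ F : X → ℝ≥0∞,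
      ∫⁻ u, C.indicator 1 u * F u ∂μ = ∫⁻ u in C, F u ∂μ := by
    intro C hC F
    rw [← lintegral_indicator hC]
    simp only [← Set.indicator_mul_left, Pi.one_apply, one_mul]
  rw [← hset hA, ← hset hB]
  simpa only [lintegral_indicator_one hA, lintegral_indicator_one hB] using hAB

lemma IsLintegralReversible.of_eq_add_dirac {κ K : Kernel X X} {μ : Measure X}
    (hκ : κ.IsLintegralReversible μ) {r : X → ℝ≥0∞}
    (hK : ∀ u, K u = κ u + r u • Measure.dirac u) : K.IsLintegralReversible μ := by
  have hsplit : ∀ f g : X → ℝ≥0∞, Measurable f → Measurable g →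
      ∫⁻ u, f u * ∫⁻ v, g v ∂(K u) ∂μ =
        ∫⁻ u, f u * ∫⁻ v, g v ∂(κ u) ∂μ + ∫⁻ u, r u * (f u * g u) ∂μ := by
    intro f g hf hg
    simp only [hK, lintegral_add_measure, lintegral_smul_measure, lintegral_dirac' _ hg,
      smul_eq_mul, mul_add]
    rw [lintegral_add_left (f := fun u => f u * ∫⁻ v, g v ∂κ u) (hf.mul hg.lintegral_kernel)]
    congr 2 with u
    ring
  intro f g hf hg
  rw [hsplit f g hf hg, hsplit g f hg hf, hκ f g hf hg]
  congr 2 with u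
  ring

lemma isMarkovKernel_of_eq_add_dirac {κ K : Kernel X X} (hκ : ∀ u, κ u Set.univ ≤ 1)
    (hK : ∀ u, K u = κ u + (1 - κ u Set.univ) • Measure.dirac u) : IsMarkovKernel K :=
  ⟨fun u => ⟨by simp [hK u, add_tsub_cancel_of_le (hκ u)]⟩⟩

lemma lintegral_lintegral_mul_comm_of_symm {ν : Measure X} [SFinite ν] {S : X → X → ℝ≥0∞}
    (hS : Measurable (uncurry S)) (hsymm : ∀ u v, S u v = S v u) {f g : X → ℝ≥0∞}
    (hf : Measurable f) (hg : Measurable g) :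
    ∫⁻ u, ∫⁻ v, S u v * (f u * g v) ∂ν ∂ν = ∫⁻ u, ∫⁻ v, S u v * (g u * f v) ∂ν ∂ν := by
  rw [lintegral_lintegral_swap (by fun_prop)]
  refine lintegral_congr fun u => lintegral_congr fun v => ?_
  rw [hsymm, mul_comm (f v)]

lemma isLintegralReversible_withDensity {ν : Measure X} [SFinite ν] {q : Kernel X X}
    [IsSFiniteKernel q] {p : X → ℝ≥0∞} {P α : X → X → ℝ≥0∞} (hp : Measurable p)
    (hP : Measurable (uncurry P)) (hα : Measurable (uncurry α))
    (hq : ∀ u, q u = ν.withDensity (P u))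
    (hbal : ∀ u v, p u * P u v * α u v = p v * P v u * α v u) :
    (q.withDensity α).IsLintegralReversible (ν.withDensity p) := by
  have hflow : ∀ f g : X → ℝ≥0∞, Measurable f → Measurable g →
      ∫⁻ u, f u * ∫⁻ v, g v ∂(q.withDensity α u) ∂(ν.withDensity p) =
        ∫⁻ u, ∫⁻ v, p u * P u v * α u v * (f u * g v) ∂ν ∂ν := by
    intro f g hf hg
    have hinner : ∀ u, ∫⁻ v, g v ∂(q.withDensity α u) = ∫⁻ v, P u v * α u v * g v ∂ν := by
      intro u
      rw [Kernel.withDensity_apply q hα, hq u, lintegral_withDensity_eq_lintegral_mul _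
        (by fun_prop) hg, lintegral_withDensity_eq_lintegral_mul _ (by fun_prop) (by fun_prop)]
      simp only [Pi.mul_apply, mul_assoc]
    rw [lintegral_withDensity_eq_lintegral_mul _ hp
      (g := fun u => f u * ∫⁻ v, g v ∂(q.withDensity α u)) (hf.mul hg.lintegral_kernel)]
    refine lintegral_congr fun u => ?_
    rw [Pi.mul_apply, hinner, ← lintegral_const_mul _ (by fun_prop),
      ← lintegral_const_mul _ (by fun_prop)]
    refine lintegral_congr fun v => ?_
    ring
  intro f g hf hg
  rw [hflow f g hf hg, hflow g f hg hf]
  exact lintegral_lintegral_mul_comm_of_symm (by fun_prop) hbal hf hg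

lemma eq_withDensity_add_dirac {q K : Kernel X X} [IsSFiniteKernel q] {α : X → X → ℝ≥0∞}
    (hα : Measurable (uncurry α))
    (hK : ∀ u A, MeasurableSet A →
      K u A = (∫⁻ v in A, α u v ∂(q u)) +
        A.indicator (fun _ => (1 : ℝ≥0∞)) u * (1 - ∫⁻ v, α u v ∂(q u))) (u : X) :
    K u = q.withDensity α u + (1 - q.withDensity α u Set.univ) • Measure.dirac u := by
  ext A hA
  rw [hK u A hA, Kernel.withDensity_apply q hα, Measure.add_apply, Measure.smul_apply,
    withDensity_apply _ hA, withDensity_apply _ MeasurableSet.univ, setLIntegral_univ,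
    Measure.dirac_apply' _ hA, smul_eq_mul, mul_comm]
  rfl

lemma withDensity_apply_univ_le_one {q : Kernel X X} [IsMarkovKernel q] {α : X → X → ℝ≥0∞}
    (hα : Measurable (uncurry α)) (hα_le : ∀ u v, α u v ≤ 1) (u : X) :
    q.withDensity α u Set.univ ≤ 1 := by
  rw [Kernel.withDensity_apply q hα, withDensity_apply _ MeasurableSet.univ, setLIntegral_univ]
  calc ∫⁻ v, α u v ∂(q u) ≤ ∫⁻ _, 1 ∂(q u) := lintegral_mono (hα_le u)
    _ = 1 := by simp

end ProbabilityTheory.Kernel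

@[fun_prop]
lemma Continuous.gaussPdf {X : Type*} [TopologicalSpace X] {d : ℕ} (M : Matrix (Fin d) (Fin d) ℝ)
    {m x : X → Fin d → ℝ} (hm : Continuous m) (hx : Continuous x) :
    Continuous fun s => gaussPdf d M (m s) (x s) := by
  unfold _root_.gaussPdf
  fun_prop

lemma gaussPdf_nonneg (d : ℕ) (M : Matrix (Fin d) (Fin d) ℝ) (m x : Fin d → ℝ) :
    0 ≤ gaussPdf d M m x := by
  unfold gaussPdf
  positivity

lemma gaussPdf_eq_gaussPdf_zero_sub (d : ℕ) (M : Matrix (Fin d) (Fin d) ℝ) (m x : Fin d → ℝ) :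
    gaussPdf d M m x = gaussPdf d M 0 (x - m) := by
  rw [gaussPdf, gaussPdf, sub_zero]

lemma lintegral_comp_mulVec {ι : Type*} [Fintype ι] [DecidableEq ι] {S : Matrix ι ι ℝ}
    (hS : S.det ≠ 0) {F : (ι → ℝ) → ℝ≥0∞} (hF : Measurable F) :
    ∫⁻ y, F (S *ᵥ y) = ENNReal.ofReal |S.det⁻¹| * ∫⁻ x, F x := by
  rw [← smul_eq_mul, ← lintegral_smul_measure, ← Real.map_matrix_volume_pi_eq_smul_volume_pi hS,
    lintegral_map hF (Matrix.toLin' S).continuous_of_finiteDimensional.measurable]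
  rfl

lemma lintegral_ofReal_prod_gaussianPDFReal (ι : Type*) [Fintype ι] :
    ∫⁻ y : ι → ℝ, ENNReal.ofReal (∏ i, gaussianPDFReal 0 1 (y i)) = 1 := by
  rw [← ofReal_integral_eq_lintegral_ofReal, integral_fintype_prod_volume_eq_prod]
  · simp [integral_gaussianPDFReal_eq_one]
  · exact Integrable.fintype_prod fun _ => integrable_gaussianPDFReal 0 1
  · exact Filter.Eventually.of_forall fun y =>
      Finset.prod_nonneg fun i _ => gaussianPDFReal_nonneg 0 1 (y i)

lemma dotProduct_inv_mulVec_mulVec {ι : Type*} [Fintype ι] [DecidableEq ι] {S : Matrix ι ι ℝ}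
    (hS : S.det ≠ 0) (y : ι → ℝ) : (S *ᵥ y) ⬝ᵥ ((S * Sᵀ)⁻¹ *ᵥ (S *ᵥ y)) = y ⬝ᵥ y := by
  have hSu : IsUnit S.det := hS.isUnit
  rw [Matrix.mul_inv_rev, Matrix.mulVec_mulVec, Matrix.mul_assoc, Matrix.nonsing_inv_mul S hSu,
    Matrix.mul_one, Matrix.dotProduct_mulVec, ← Matrix.mulVec_transpose,
    Matrix.transpose_nonsing_inv, Matrix.transpose_transpose, Matrix.mulVec_mulVec,
    Matrix.nonsing_inv_mul S hSu, Matrix.one_mulVec]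

lemma gaussPdf_zero_mulVec {d : ℕ} {S : Matrix (Fin d) (Fin d) ℝ} (hS : S.det ≠ 0)
    (y : Fin d → ℝ) :
    gaussPdf d (S * Sᵀ) 0 (S *ᵥ y) = |S.det|⁻¹ * ∏ i, gaussianPDFReal 0 1 (y i) := by
  have hconst : √((2 * π) ^ d * (S * Sᵀ).det) = √(2 * π) ^ d * |S.det| := by
    have h2π : (2 * π) ^ d = √(2 * π) ^ d * √(2 * π) ^ d := by
      rw [← mul_pow, Real.mul_self_sqrt (by positivity)]
    rw [Matrix.det_mul, Matrix.det_transpose, h2π, mul_mul_mul_comm, Real.sqrt_mul_self_eq_abs,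
      abs_mul, abs_of_nonneg (by positivity)]
  rw [gaussPdf, sub_zero, dotProduct_inv_mulVec_mulVec hS, hconst]
  simp only [gaussianPDFReal, Finset.prod_mul_distrib, ← Real.exp_sum, Finset.prod_const,
    Finset.card_univ, Fintype.card_fin, dotProduct, Finset.mul_sum, NNReal.coe_one, mul_one,
    sub_zero]
  field_simp
  rw [← mul_pow, mul_one_div_cancel (by positivity), one_pow]

open scoped MatrixOrder in
lemma lintegral_gaussPdf {d : ℕ} {M : Matrix (Fin d) (Fin d) ℝ} (hM : M.PosDef) (m : Fin d → ℝ) :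
    ∫⁻ x, ENNReal.ofReal (gaussPdf d M m x) = 1 := by
  set S := CFC.sqrt M
  have hSS : M = S * Sᵀ := by
    have hSt : Sᵀ = S := (CFC.sqrt_nonneg M).posSemidef.1
    rw [hSt, CFC.sqrt_mul_sqrt_self M hM.posSemidef.nonneg]
  have hS : S.det ≠ 0 := by
    intro h
    have := hM.det_pos
    rw [hSS, Matrix.det_mul, h, zero_mul] at this
    exact this.false
  -- substituting `x = S y` turns `N(0, M)` into the standard Gaussian on `ℝᵈ`
  have hcov := lintegral_comp_mulVec hS
    (F := fun x => ENNReal.ofReal (gaussPdf d M 0 x)) (by fun_prop)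
  simp only [hSS, gaussPdf_zero_mulVec hS, ENNReal.ofReal_mul (inv_nonneg.2 (abs_nonneg _)),
    lintegral_const_mul' _ _ ENNReal.ofReal_ne_top, lintegral_ofReal_prod_gaussianPDFReal,
    abs_inv] at hcov
  simp_rw [gaussPdf_eq_gaussPdf_zero_sub d M m]
  rw [lintegral_sub_right_eq_self (fun x => ENNReal.ofReal (gaussPdf d M 0 x)) m, hSS]
  have hpos : ENNReal.ofReal |S.det|⁻¹ ≠ 0 := by simpa using hS
  exact (ENNReal.mul_right_inj hpos ENNReal.ofReal_ne_top).1 hcov.symm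

lemma Matrix.inv_smul_eq_inv_smul_inv {n K : Type*} [Fintype n] [DecidableEq n] [Field K] (k : K)
    (A : Matrix n n K) : (k • A)⁻¹ = k⁻¹ • A⁻¹ := by
  rcases eq_or_ne k 0 with rfl | hk
  · simp
  by_cases hA : IsUnit A.det
  · exact Matrix.inv_smul' A (Units.mk0 k hk) hA
  · have hkA : ¬IsUnit (k • A).det := by
      rwa [Matrix.det_smul, IsUnit.mul_iff, not_and_or, or_iff_right (by simp [hk])]
    rw [Matrix.nonsing_inv_apply_not_isUnit _ hA, Matrix.nonsing_inv_apply_not_isUnit _ hkA,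
      smul_zero]

lemma dotProduct_mulVec_add_pcn_comm {n : Type*} [Fintype n] {A : Matrix n n ℝ} (hA : Aᵀ = A)
    {ρ : ℝ} (hρ : 1 - ρ ^ 2 ≠ 0) (u v : n → ℝ) :
    u ⬝ᵥ A *ᵥ u + (v - ρ • u) ⬝ᵥ ((1 - ρ ^ 2)⁻¹ • A) *ᵥ (v - ρ • u) =
      v ⬝ᵥ A *ᵥ v + (u - ρ • v) ⬝ᵥ ((1 - ρ ^ 2)⁻¹ • A) *ᵥ (u - ρ • v) := by
  have hAuv : v ⬝ᵥ A *ᵥ u = u ⬝ᵥ A *ᵥ v := by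
    rw [Matrix.dotProduct_mulVec, ← Matrix.mulVec_transpose, hA, dotProduct_comm]
  simp only [Matrix.smul_mulVec, Matrix.mulVec_sub, Matrix.mulVec_smul, dotProduct_smul,
    sub_dotProduct, dotProduct_sub, smul_dotProduct, smul_eq_mul, hAuv]
  field_simp
  ring

lemma gaussPdf_mul_gaussPdf_pcn_comm {d : ℕ} {C : Matrix (Fin d) (Fin d) ℝ} (hC : Cᵀ = C)
    {ρ : ℝ} (hρ : 1 - ρ ^ 2 ≠ 0) (u v : Fin d → ℝ) :
    gaussPdf d C 0 u * gaussPdf d ((1 - ρ ^ 2) • C) (ρ • u) v =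
      gaussPdf d C 0 v * gaussPdf d ((1 - ρ ^ 2) • C) (ρ • v) u := by
  have hCinv : C⁻¹ᵀ = C⁻¹ := by rw [Matrix.transpose_nonsing_inv, hC]
  simp only [gaussPdf, div_mul_div_comm, ← Real.exp_add, sub_zero,
    Matrix.inv_smul_eq_inv_smul_inv]
  congr 2
  rw [← mul_add, ← mul_add, dotProduct_mulVec_add_pcn_comm hCinv hρ]

lemma isMarkovKernel_of_eq_withDensity_gaussPdf {X : Type*} [MeasurableSpace X] {d : ℕ}
    {M : Matrix (Fin d) (Fin d) ℝ} (hM : M.PosDef) {m : X → Fin d → ℝ} {q : Kernel X (Fin d → ℝ)}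
    (hq : ∀ u, q u = volume.withDensity fun v => ENNReal.ofReal (gaussPdf d M (m u) v)) :
    IsMarkovKernel q :=
  ⟨fun u => ⟨by rw [hq u, withDensity_apply _ MeasurableSet.univ, setLIntegral_univ,
    lintegral_gaussPdf hM]⟩⟩

lemma mul_min_one_div {a : ℝ} (ha : 0 < a) (b : ℝ) : a * min 1 (b / a) = min a b := by
  rw [mul_min_of_nonneg _ _ ha.le, mul_one, mul_div_cancel₀ _ ha.ne']

lemma pcn_metropolis_detailed_balance {d : ℕ} {C : Matrix (Fin d) (Fin d) ℝ} (hC : Cᵀ = C)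
    {ρ : ℝ} (hρ : 1 - ρ ^ 2 ≠ 0) {l : (Fin d → ℝ) → ℝ} (hl : ∀ u, 0 < l u) (u v : Fin d → ℝ) :
    gaussPdf d C 0 u * l u * gaussPdf d ((1 - ρ ^ 2) • C) (ρ • u) v * min 1 (l v / l u) =
      gaussPdf d C 0 v * l v * gaussPdf d ((1 - ρ ^ 2) • C) (ρ • v) u * min 1 (l u / l v) :=
  calc _ = (gaussPdf d C 0 u * gaussPdf d ((1 - ρ ^ 2) • C) (ρ • u) v) *
        (l u * min 1 (l v / l u)) := by ring
    _ = (gaussPdf d C 0 v * gaussPdf d ((1 - ρ ^ 2) • C) (ρ • v) u) *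
        (l v * min 1 (l u / l v)) := by
      rw [gaussPdf_mul_gaussPdf_pcn_comm hC hρ, mul_min_one_div (hl u), mul_min_one_div (hl v),
        min_comm]
    _ = _ := by ring

theorem pcn_metropolis_hastings_reversible_general
    (d : ℕ) (C : Matrix (Fin d) (Fin d) ℝ) (hC : C.PosDef)
    (ρ : ℝ) (hρ : ρ ∈ Set.Ioo (-1 : ℝ) 1)
    (l : (Fin d → ℝ) → ℝ) (hl_meas : Measurable l) (hl_pos : ∀ u, 0 < l u)
    -- the Gaussian prior `μ₀ = N(0,C)` given by its density w.r.t. Lebesgue measure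
    (μ₀ : Measure (Fin d → ℝ))
    (hμ₀ : μ₀ = volume.withDensity (fun u => ENNReal.ofReal (gaussPdf d C 0 u)))
    -- the posterior `μ` with `dμ/dμ₀ ∝ l`
    (μ : Measure (Fin d → ℝ))
    (hμ : μ = (∫⁻ u, ENNReal.ofReal (l u) ∂μ₀)⁻¹ •
        μ₀.withDensity (fun u => ENNReal.ofReal (l u)))
    -- the pCN proposal kernel `q(u,·) = N(ρu, (1-ρ²)C)`
    (q : Kernel (Fin d → ℝ) (Fin d → ℝ))
    (hq : ∀ u, q u =
        volume.withDensity (fun v => ENNReal.ofReal (gaussPdf d ((1 - ρ ^ 2) • C) (ρ • u) v)))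
    -- the Metropolis–Hastings kernel with acceptance probability `α(u,v) = min{1, l(v)/l(u)}`
    (K : Kernel (Fin d → ℝ) (Fin d → ℝ))
    (hK : ∀ u A, MeasurableSet A →
        K u A = (∫⁻ v in A, ENNReal.ofReal (min 1 (l v / l u)) ∂(q u)) +
          (A.indicator (fun _ => (1 : ℝ≥0∞)) u) *
            (1 - ∫⁻ v, ENNReal.ofReal (min 1 (l v / l u)) ∂(q u))) :
    (∀ f g : (Fin d → ℝ) → ℝ≥0∞, Measurable f → Measurable g →
        ∫⁻ u, f u * ∫⁻ v, g v ∂(K u) ∂μ = ∫⁻ u, g u * ∫⁻ v, f v ∂(K u) ∂μ) ∧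
      μ.bind K = μ := by
  have hρ' : 0 < 1 - ρ ^ 2 := by nlinarith [hρ.1, hρ.2]
  set α : (Fin d → ℝ) → (Fin d → ℝ) → ℝ≥0∞ := fun u v => ENNReal.ofReal (min 1 (l v / l u))
  have hα : Measurable (uncurry α) := by fun_prop
  have : IsMarkovKernel q := isMarkovKernel_of_eq_withDensity_gaussPdf (hC.smul hρ') hq
  have hKα := Kernel.eq_withDensity_add_dirac hα hK
  set c := (∫⁻ u, ENNReal.ofReal (l u) ∂μ₀)⁻¹
  have hμ' : μ = volume.withDensity fun u =>
      c * (ENNReal.ofReal (gaussPdf d C 0 u) * ENNReal.ofReal (l u)) := by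
    rw [hμ, hμ₀, ← withDensity_mul _ (by fun_prop) (by fun_prop),
      ← withDensity_smul _ (by fun_prop)]
    rfl
  have hrev : K.IsLintegralReversible μ := by
    refine hμ' ▸ (Kernel.isLintegralReversible_withDensity (by fun_prop) (by fun_prop) hα hq
      fun u v => ?_).of_eq_add_dirac hKα
    have hCt : Cᵀ = C := (conjTranspose_eq_transpose_of_trivial C).symm.trans hC.1
    have h := congrArg (fun x => c * ENNReal.ofReal x)
      (pcn_metropolis_detailed_balance hCt hρ'.ne' hl_pos u v)
    simpa only [ENNReal.ofReal_mul, gaussPdf_nonneg, (hl_pos _).le, mul_assoc] using h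
  have : IsMarkovKernel K := Kernel.isMarkovKernel_of_eq_add_dirac
    (Kernel.withDensity_apply_univ_le_one hα fun _ _ => ENNReal.ofReal_le_one.2 (min_le_left _ _))
    hKα
  exact ⟨hrev, hrev.isReversible.invariant⟩

/-- The Metropolis–Hastings kernel built from the pCN proposal
`ũ = ρu + √(1-ρ²) N(0,C)` and acceptance probability `min{1, l(ũ)/l(u)}` is reversible
with respect to the posterior `μ` with `dμ/dμ₀ ∝ l`, `μ₀ = N(0,C)`; in particular it is
`μ`-invariant. -/
theorem pcn_metropolis_hastings_reversible
    (d : ℕ) (C : Matrix (Fin d) (Fin d) ℝ) (hC : C.PosDef)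
    (ρ : ℝ) (hρ : ρ ∈ Set.Ioo (-1 : ℝ) 1)
    (l : (Fin d → ℝ) → ℝ) (hl_meas : Measurable l) (hl_pos : ∀ u, 0 < l u)
    (B : ℝ) (hl_bdd : ∀ u, l u ≤ B)
    -- the Gaussian prior `μ₀ = N(0,C)` given by its density w.r.t. Lebesgue measure
    (μ₀ : Measure (Fin d → ℝ))
    (hμ₀ : μ₀ = volume.withDensity (fun u => ENNReal.ofReal (gaussPdf d C 0 u)))
    -- the posterior `μ` with `dμ/dμ₀ ∝ l`
    (μ : Measure (Fin d → ℝ))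
    (hμ : μ = (∫⁻ u, ENNReal.ofReal (l u) ∂μ₀)⁻¹ •
        μ₀.withDensity (fun u => ENNReal.ofReal (l u)))
    -- the pCN proposal kernel `q(u,·) = N(ρu, (1-ρ²)C)`
    (q : Kernel (Fin d → ℝ) (Fin d → ℝ))
    (hq : ∀ u, q u =
        volume.withDensity (fun v => ENNReal.ofReal (gaussPdf d ((1 - ρ ^ 2) • C) (ρ • u) v)))
    -- the Metropolis–Hastings kernel with acceptance probability `α(u,v) = min{1, l(v)/l(u)}`
    (K : Kernel (Fin d → ℝ) (Fin d → ℝ))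
    (hK : ∀ u A, MeasurableSet A →
        K u A = (∫⁻ v in A, ENNReal.ofReal (min 1 (l v / l u)) ∂(q u)) +
          (A.indicator (fun _ => (1 : ℝ≥0∞)) u) *
            (1 - ∫⁻ v, ENNReal.ofReal (min 1 (l v / l u)) ∂(q u))) :
    (∀ f g : (Fin d → ℝ) → ℝ≥0∞, Measurable f → Measurable g →
        ∫⁻ u, f u * ∫⁻ v, g v ∂(K u) ∂μ = ∫⁻ u, g u * ∫⁻ v, f v ∂(K u) ∂μ) ∧
      μ.bind K = μ :=
  pcn_metropolis_hastings_reversible_general d C hC ρ hρ l hl_meas hl_pos μ₀ hμ₀ μ hμ q hq K hK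
end
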